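/- Let L be a lamination system on S^1, I a nondegenerate open interval, and x ∈ I with C_x^I nonempty. Then there exists an increasing sequence {J_n} in C_x^I with ∪_n J_n = ∪_{K ∈ C_x^I} K, and a decreasing sequence {K_n} in C_x^I with ∩_n K_n = ∩_{K ∈ C_x^I} K. -/

import Mathlib

open Set Topology

noncomputable section

/-- Stereographic projection from `1 ∈ S¹`. -/
def sproj (z : Circle) : ℝ := (z : ℂ).im / ((z : ℂ).re - 1)

/-- `(a,b,c)` is a positively oriented triple on `S¹`. -/
def posOri (a b c : Circle) : Prop :=
  a ≠ b ∧ b ≠ c ∧ c ≠ a ∧ sproj (a⁻¹ * b) < sproj (a⁻¹ * c)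

/-- The nondegenerate open interval `(u,v)` on `S¹`. -/
def oInt (u v : Circle) : Set Circle := {p | posOri u p v}

/-- `I` is a nondegenerate open interval on `S¹`. -/
def IsND (I : Set Circle) : Prop := ∃ u v : Circle, u ≠ v ∧ I = oInt u v

/-- The dual interval `I* = (v,u)` of `I = (u,v)`, i.e. the interior of the complement. -/
def dual (I : Set Circle) : Set Circle := interior Iᶜ

/-- The leaf `{I, I*}` lies on `J`. -/
def LiesOn (I J : Set Circle) : Prop := I ⊆ J ∨ dual I ⊆ J

/-- A lamination system on `S¹`. -/
structure LamSys (L : Set (Set Circle)) : Prop where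
  nonempty : L.Nonempty
  nd : ∀ I ∈ L, IsND I
  dualMem : ∀ I ∈ L, dual I ∈ L
  unlinked : ∀ I ∈ L, ∀ J ∈ L, LiesOn I J ∨ LiesOn I (dual J)
  chainUnion : ∀ f : ℕ → Set Circle, (∀ n, f n ∈ L) → (∀ n, f n ⊆ f (n + 1)) →
    IsND (⋃ n, f n) → (⋃ n, f n) ∈ L

/-- The leaf associated to an interval. -/
def leafOf (I : Set Circle) : Set (Set Circle) := {I, dual I}

/-- `liminf` of a sequence of sets. -/
def sLiminf (f : ℕ → Set Circle) : Set Circle := ⋃ k, ⋂ n, ⋂ (_ : k ≤ n), f n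

/-- `limsup` of a sequence of sets. -/
def sLimsup (f : ℕ → Set Circle) : Set Circle := ⋂ k, ⋃ n, ⋃ (_ : k ≤ n), f n

/-- The sequence of intervals converges to `J`. -/
def ConvTo (f : ℕ → Set Circle) (J : Set Circle) : Prop :=
  J ⊆ sLiminf f ∧ sLiminf f ⊆ sLimsup f ∧ sLimsup f ⊆ closure J

/-- A gap of a lamination system. -/
def IsGap (L G : Set (Set Circle)) : Prop :=
  G ⊆ L ∧ (∀ I ∈ G, ∀ J ∈ G, I ≠ J → I ∩ J = ∅) ∧ ∀ I ∈ L, ∃ J ∈ G, LiesOn I J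

/-- A gap which is a leaf. -/
def IsLeafGap (G : Set (Set Circle)) : Prop := ∃ I, G = leafOf I

/-- The vertex (endpoint) set of a gap. -/
def vset (G : Set (Set Circle)) : Set Circle := (⋃₀ G)ᶜ

/-- A very full lamination system: every gap is an ideal polygon (finite vertex set). -/
def VeryFull (L : Set (Set Circle)) : Prop := ∀ G, IsGap L G → (vset G).Finite

/-- The set of endpoints of leaves of `L`. -/
def ELset (L : Set (Set Circle)) : Set Circle := ⋃ I ∈ L, frontier I

/-- A rainbow at `p`. -/
def Rainbow (L : Set (Set Circle)) (p : Circle) (f : ℕ → Set Circle) : Prop :=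
  (∀ n, f n ∈ L) ∧ (∀ n, f (n + 1) ⊆ f n) ∧ (⋂ n, f n) = {p}

/-- An `I`-side sequence of leaves. -/
def SideSeq (L : Set (Set Circle)) (I : Set Circle) (f : ℕ → Set Circle) : Prop :=
  (∀ n, f n ∈ L) ∧ (∀ n, I ∉ leafOf (f n)) ∧ (∀ n, LiesOn (f n) I) ∧ ConvTo f I

/-- `I` is isolated in `L`. -/
def IsolatedInt (L : Set (Set Circle)) (I : Set Circle) : Prop := ∀ f, ¬ SideSeq L I f

/-- `C_p^I`. -/
def Cset (L : Set (Set Circle)) (p : Circle) (I : Set Circle) : Set (Set Circle) :=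
  {J ∈ L | p ∈ J ∧ J ⊆ I}

/-- The group of self-homeomorphisms of the circle (composition as multiplication). -/
instance : Group (Circle ≃ₜ Circle) where
  mul g h := h.trans g
  one := Homeomorph.refl _
  inv := Homeomorph.symm
  mul_assoc _ _ _ := Homeomorph.ext fun _ => rfl
  one_mul _ := Homeomorph.ext fun _ => rfl
  mul_one _ := Homeomorph.ext fun _ => rfl
  inv_mul_cancel g := Homeomorph.ext fun x => g.symm_apply_apply x

/-- An orientation-preserving homeomorphism of the circle. -/
def OrientPres (g : Circle ≃ₜ Circle) : Prop :=
  ∀ a b c, posOri a b c → posOri (g a) (g b) (g c)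

/-- `L` is invariant under a subgroup `G` of homeomorphisms. -/
def GInv (G : Subgroup (Circle ≃ₜ Circle)) (L : Set (Set Circle)) : Prop :=
  ∀ g ∈ G, ∀ I ∈ L, (⇑g) '' I ∈ L

/-- The image of a gap under a homeomorphism. -/
def gapIm (g : Circle ≃ₜ Circle) (P : Set (Set Circle)) : Set (Set Circle) :=
  (fun I => (⇑g) '' I) '' P

/-- `v_G(P)`, the union of the vertex sets of the `G`-orbit of the gap `P`. -/
def vOrb (G : Subgroup (Circle ≃ₜ Circle)) (P : Set (Set Circle)) : Set Circle :=
  ⋃ g ∈ G, vset (gapIm g P)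

/-- A loose lamination system: distinct non-leaf gaps have disjoint vertex sets. -/
def Loose (L : Set (Set Circle)) : Prop :=
  ∀ P Q, IsGap L P → IsGap L Q → ¬ IsLeafGap P → ¬ IsLeafGap Q → P ≠ Q →
    vset P ∩ vset Q = ∅

/-- A pseudo-fibered triple `(L₁, L₂, G)`. -/
structure PFib (L₁ L₂ : Set (Set Circle)) (G : Subgroup (Circle ≃ₜ Circle)) : Prop where
  orient : ∀ g ∈ G, OrientPres g
  fg : G.FG
  lam₁ : LamSys L₁
  lam₂ : LamSys L₂
  inv₁ : GInv G L₁
  inv₂ : GInv G L₂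
  veryFull₁ : VeryFull L₁
  veryFull₂ : VeryFull L₂
  loose₁ : Loose L₁
  loose₂ : Loose L₂
  disjEnds : ELset L₁ ∩ ELset L₂ = ∅

end

/-!
Any two members of `C_x^I` are nested: both contain `x` and lie in `I`, and the other
configurations allowed by unlinkedness would either expel `x` or leave no room for `dual I`.
So `C_x^I` is a chain of open intervals, which are regular open sets. The circle is second
countable, so the union of the chain is the union of a countable subfamily (Lindelöf), and so is
the intersection: apply Lindelöf to the open sets `(closure K)ᶜ`, through which regularity makes
every strictly smaller member visible. Running maxima (resp. minima) along an enumeration of the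
countable subfamily are the required sequences.
-/

section Chain

variable {α : Type*}

theorem IsChain.partialSups_mem [SemilatticeSup α] {C : Set α} (hC : IsChain (· ≤ ·) C)
    {f : ℕ → α} (hf : ∀ n, f n ∈ C) (n : ℕ) : partialSups f n ∈ C := by
  induction n with
  | zero => simpa using hf 0
  | succ n ih =>
    rw [partialSups_add_one]
    rcases hC.total ih (hf (n + 1)) with h | h
    · exact (sup_eq_right.2 h).symm ▸ hf (n + 1)
    · exact (sup_eq_left.2 h).symm ▸ ih

theorem IsChain.exists_monotone_iSup_eq [CompleteLattice α] {C : Set α}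
    (hC : IsChain (· ≤ ·) C) (hne : C.Nonempty) {T : Set α} (hTC : T ⊆ C) (hT : T.Countable)
    (hsup : sSup T = sSup C) : ∃ J : ℕ → α, (∀ n, J n ∈ C) ∧ Monotone J ∧ ⨆ n, J n = sSup C := by
  obtain ⟨c, hc⟩ := hne
  obtain ⟨f, hf⟩ := (hT.insert c).exists_eq_range (insert_nonempty c T)
  have hfC : ∀ n, f n ∈ C := fun n => insert_subset hc hTC (hf ▸ mem_range_self n)
  refine ⟨partialSups f, hC.partialSups_mem hfC, (partialSups f).monotone, ?_⟩
  rw [iSup_partialSups_eq, ← sSup_range, ← hf, sSup_insert, hsup, sup_eq_right.2 (le_sSup hc)]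

theorem IsChain.exists_antitone_iInf_eq [CompleteLattice α] {C : Set α}
    (hC : IsChain (· ≤ ·) C) (hne : C.Nonempty) {T : Set α} (hTC : T ⊆ C) (hT : T.Countable)
    (hinf : sInf T = sInf C) : ∃ K : ℕ → α, (∀ n, K n ∈ C) ∧ Antitone K ∧ ⨅ n, K n = sInf C :=
  IsChain.exists_monotone_iSup_eq (α := αᵒᵈ) hC.symm hne hTC hT hinf

end Chain

theorem IsChain.exists_countable_subset_sInter_eq {X : Type*} [TopologicalSpace X]
    [SecondCountableTopology X] {C : Set (Set X)} (hC : IsChain (· ⊆ ·) C)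
    (hreg : ∀ U ∈ C, interior (closure U) = U) : ∃ T ⊆ C, T.Countable ∧ ⋂₀ T = ⋂₀ C := by
  obtain ⟨S, hSC, hS, hSU⟩ := TopologicalSpace.isOpen_biUnion_countable C
    (fun U => (closure U)ᶜ) fun U _ => isClosed_closure.isOpen_compl
  -- a least element of `C` cannot be cut out by the sets `(closure U)ᶜ`, so it is added by hand
  set M := {U ∈ C | ∀ V ∈ C, U ⊆ V}
  have hMC : M ⊆ C := sep_subset _ _
  have hM : M.Subsingleton := fun U hU V hV => (hU.2 V hV.1).antisymm (hV.2 U hU.1)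
  refine ⟨S ∪ M, union_subset hSC hMC, hS.union hM.countable,
    (subset_sInter fun U hU => ?_).antisymm (sInter_subset_sInter (union_subset hSC hMC))⟩
  by_cases hUM : U ∈ M
  · exact sInter_subset_of_mem (Or.inr hUM)
  obtain ⟨V, hV, hUV⟩ : ∃ V ∈ C, ¬U ⊆ V := by simpa [M, hU] using hUM
  obtain ⟨p, hpU, hpV⟩ : (U \ closure V).Nonempty := by
    refine sdiff_nonempty.2 fun hUcl => hUV ?_
    rw [← hreg V hV]
    exact interior_maximal hUcl (hreg U hU ▸ isOpen_interior)
  have hpS : p ∈ ⋃ W ∈ S, (closure W)ᶜ := hSU ▸ mem_biUnion hV hpV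
  obtain ⟨W, hWS, hpW⟩ := mem_iUnion₂.1 hpS
  have hWU : W ⊆ U := (hC.total (hSC hWS) hU).resolve_right
    fun hUW => hpW (subset_closure (hUW hpU))
  exact (sInter_subset_of_mem (Or.inl hWS)).trans hWU

-- `(t - i) / (t + i)`
noncomputable def sprojInv (t : ℝ) : Circle :=
  ⟨⟨(t ^ 2 - 1) / (t ^ 2 + 1), -2 * t / (t ^ 2 + 1)⟩, by
    have h : t ^ 2 + 1 ≠ 0 := by positivity
    show _ ∈ Metric.sphere (0 : ℂ) 1
    rw [mem_sphere_zero_iff_norm, Complex.norm_def, Complex.normSq_mk, ← Real.sqrt_one]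
    congr 1
    field_simp
    ring⟩

@[simp] lemma sprojInv_re (t : ℝ) : (sprojInv t : ℂ).re = (t ^ 2 - 1) / (t ^ 2 + 1) := rfl

@[simp] lemma sprojInv_im (t : ℝ) : (sprojInv t : ℂ).im = -2 * t / (t ^ 2 + 1) := rfl

lemma sprojInv_ne_one (t : ℝ) : sprojInv t ≠ 1 := by
  intro h
  have hre := congrArg (fun z : Circle => (z : ℂ).re) h
  simp only [sprojInv_re, Circle.coe_one, Complex.one_re] at hre
  rw [div_eq_one_iff_eq (by positivity)] at hre
  linarith

lemma sproj_sprojInv (t : ℝ) : sproj (sprojInv t) = t := by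
  have h : t ^ 2 + 1 ≠ 0 := by positivity
  rw [sproj, sprojInv_re, sprojInv_im, div_eq_iff]
  · field_simp
    ring
  · rw [div_sub_one h]
    exact div_ne_zero (by ring_nf; norm_num) h

lemma Circle.re_ne_one {z : Circle} (h : z ≠ 1) : (z : ℂ).re ≠ 1 := by
  intro hre
  have hn := Circle.normSq_coe z
  rw [Complex.normSq_apply, hre] at hn
  have him : (z : ℂ).im = 0 := by nlinarith
  exact h (Circle.ext (Complex.ext (by simpa using hre) (by simpa using him)))

lemma sprojInv_sproj {z : Circle} (h : z ≠ 1) : sprojInv (sproj z) = z := by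
  have hre : (z : ℂ).re - 1 ≠ 0 := sub_ne_zero.2 (Circle.re_ne_one h)
  have hn : (z : ℂ).re ^ 2 + (z : ℂ).im ^ 2 = 1 := by
    simpa [Complex.normSq_apply, sq] using Circle.normSq_coe z
  have hden : sproj z ^ 2 + 1 ≠ 0 := by positivity
  have hb : (z : ℂ).im = sproj z * ((z : ℂ).re - 1) := by rw [sproj]; field_simp
  have key : (sproj z ^ 2 + 1) * ((z : ℂ).re - 1) = -2 := by
    apply mul_left_cancel₀ hre
    linear_combination hn - (sproj z * ((z : ℂ).re - 1) + (z : ℂ).im) * hb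
  refine Circle.ext (Complex.ext ?_ ?_)
  · rw [sprojInv_re, div_eq_iff hden]
    apply mul_right_cancel₀ hre
    linear_combination (1 - (z : ℂ).re) * key
  · rw [sprojInv_im, div_eq_iff hden]
    apply mul_right_cancel₀ hre
    linear_combination -(z : ℂ).im * key + 2 * hb

lemma sproj_injOn : InjOn sproj {1}ᶜ := fun z hz w hw h => by
  rw [← sprojInv_sproj hz, ← sprojInv_sproj hw, h]

lemma sproj_inv (z : Circle) : sproj z⁻¹ = -sproj z := by
  rw [sproj, sproj, Circle.coe_inv_eq_conj, Complex.conj_re, Complex.conj_im, neg_div]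

lemma sproj_inv_mul {w q : Circle} (hw : w ≠ 1) (hq : q ≠ 1) (hqw : q ≠ w) :
    sproj (w⁻¹ * q) = (1 + sproj w * sproj q) / (sproj w - sproj q) := by
  obtain ⟨t, rfl⟩ : ∃ t, sprojInv t = w := ⟨_, sprojInv_sproj hw⟩
  obtain ⟨s, rfl⟩ : ∃ s, sprojInv s = q := ⟨_, sprojInv_sproj hq⟩
  have hst : s - t ≠ 0 := sub_ne_zero.2 fun h => hqw (h ▸ rfl)
  have ht : t ^ 2 + 1 ≠ 0 := by positivity
  have hs : s ^ 2 + 1 ≠ 0 := by positivity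
  have him : (((sprojInv t)⁻¹ * sprojInv s : Circle) : ℂ).im =
      2 * (s - t) * (t * s + 1) / ((t ^ 2 + 1) * (s ^ 2 + 1)) := by
    simp only [Circle.coe_mul, Circle.coe_inv_eq_conj, Complex.mul_im, Complex.conj_re,
      Complex.conj_im, sprojInv_re, sprojInv_im]
    field_simp
    ring
  have hre : (((sprojInv t)⁻¹ * sprojInv s : Circle) : ℂ).re - 1 =
      -2 * (s - t) ^ 2 / ((t ^ 2 + 1) * (s ^ 2 + 1)) := by
    simp only [Circle.coe_mul, Circle.coe_inv_eq_conj, Complex.mul_re, Complex.conj_re,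
      Complex.conj_im, sprojInv_re, sprojInv_im]
    field_simp
    ring
  rw [sproj, him, hre, sproj_sprojInv, sproj_sprojInv]
  have hts : t - s ≠ 0 := by rwa [← neg_sub, neg_ne_zero]
  field_simp
  ring

lemma continuousOn_sproj : ContinuousOn sproj {1}ᶜ :=
  ((Complex.continuous_im.comp continuous_subtype_val).continuousOn).div
    ((Complex.continuous_re.comp continuous_subtype_val).sub continuous_const).continuousOn
    fun _ hz => sub_ne_zero.2 (Circle.re_ne_one hz)

@[fun_prop]
lemma continuous_sprojInv : Continuous sprojInv := by
  refine Continuous.subtype_mk ?_ _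
  simp_rw [Complex.mk_eq_add_mul_I]
  fun_prop (disch := intros; positivity)

section OpenInterval

variable {u v p : Circle}

lemma inv_mul_ne_one_of_ne (h : p ≠ u) : u⁻¹ * p ≠ 1 := by
  rwa [Ne, inv_mul_eq_one, eq_comm]

lemma mem_oInt_iff (huv : u ≠ v) (hpu : p ≠ u) (hpv : p ≠ v) :
    p ∈ oInt u v ↔ sproj (u⁻¹ * p) < sproj (u⁻¹ * v) :=
  ⟨fun h => h.2.2.2, fun h => ⟨hpu.symm, hpv, huv.symm, h⟩⟩

lemma mem_oInt_iff_notMem_oInt_swap (huv : u ≠ v) (hpu : p ≠ u) (hpv : p ≠ v) :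
    p ∈ oInt u v ↔ p ∉ oInt v u := by
  set t := sproj (u⁻¹ * v)
  set s := sproj (u⁻¹ * p)
  have hst : s ≠ t := fun h => hpv <| mul_left_cancel <|
    sproj_injOn (inv_mul_ne_one_of_ne hpu) (inv_mul_ne_one_of_ne huv.symm) h
  have hvp : sproj (v⁻¹ * p) = (1 + t * s) / (t - s) := by
    rw [show v⁻¹ * p = (u⁻¹ * v)⁻¹ * (u⁻¹ * p) by group]
    exact sproj_inv_mul (inv_mul_ne_one_of_ne huv.symm) (inv_mul_ne_one_of_ne hpu)
      fun h => hpv (mul_left_cancel h)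
  have hvu : sproj (v⁻¹ * u) = -t := by
    rw [show v⁻¹ * u = (u⁻¹ * v)⁻¹ by group, sproj_inv]
  have hts : t - s ≠ 0 := sub_ne_zero.2 hst.symm
  have key : (1 + t * s) / (t - s) - -t = (1 + t ^ 2) / (t - s) := by
    field_simp
    ring
  have ht2 : 0 < 1 + t ^ 2 := add_pos_of_pos_of_nonneg one_pos (sq_nonneg t)
  rw [mem_oInt_iff huv hpu hpv, mem_oInt_iff huv.symm hpv hpu, hvp, hvu, not_lt, ← sub_nonneg,
    key]
  rcases hst.lt_or_gt with h | h
  · exact iff_of_true h (div_pos ht2 (sub_pos.2 h)).le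
  · exact iff_of_false h.not_gt (div_neg_of_pos_of_neg ht2 (sub_neg.2 h)).not_ge

lemma isOpen_oInt (huv : u ≠ v) : IsOpen (oInt u v) := by
  have : oInt u v = {u}ᶜ ∩ (fun p => sproj (u⁻¹ * p)) ⁻¹' Iio (sproj (u⁻¹ * v)) := by
    ext p
    refine ⟨fun hp => ⟨hp.1.symm, hp.2.2.2⟩, fun ⟨hpu, hp⟩ =>
      (mem_oInt_iff huv hpu ?_).2 hp⟩
    rintro rfl
    exact lt_irrefl (sproj (u⁻¹ * p)) hp
  rw [this]
  exact (continuousOn_sproj.comp (continuous_const_mul u⁻¹).continuousOn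
    fun p hp => inv_mul_ne_one_of_ne hp).isOpen_inter_preimage isOpen_compl_singleton isOpen_Iio

lemma mul_sprojInv_sproj (h : p ≠ u) : u * sprojInv (sproj (u⁻¹ * p)) = p := by
  rw [sprojInv_sproj (inv_mul_ne_one_of_ne h), mul_inv_cancel_left]

lemma mul_sprojInv_ne_of_ne {s : ℝ} (hs : s ≠ sproj (u⁻¹ * v)) :
    u * sprojInv s ≠ u ∧ u * sprojInv s ≠ v := by
  refine ⟨fun h => sprojInv_ne_one s (mul_eq_left.1 h), ?_⟩
  rintro rfl
  rw [inv_mul_cancel_left, sproj_sprojInv] at hs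
  exact hs rfl

lemma mul_sprojInv_mem_oInt (huv : u ≠ v) {s : ℝ} (hs : s < sproj (u⁻¹ * v)) :
    u * sprojInv s ∈ oInt u v := by
  obtain ⟨hpu, hpv⟩ := mul_sprojInv_ne_of_ne hs.ne
  rwa [mem_oInt_iff huv hpu hpv, inv_mul_cancel_left, sproj_sprojInv]

lemma mul_sprojInv_mem_oInt_swap (huv : u ≠ v) {s : ℝ} (hs : sproj (u⁻¹ * v) < s) :
    u * sprojInv s ∈ oInt v u := by
  obtain ⟨hpu, hpv⟩ := mul_sprojInv_ne_of_ne hs.ne'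
  rw [mem_oInt_iff_notMem_oInt_swap huv.symm hpv hpu, mem_oInt_iff huv hpu hpv,
    inv_mul_cancel_left, sproj_sprojInv, not_lt]
  exact hs.le

lemma right_mem_closure_oInt (huv : u ≠ v) : v ∈ closure (oInt u v) := by
  have h := map_mem_closure (f := fun s => u * sprojInv s) (by fun_prop)
    (closure_Iio (sproj (u⁻¹ * v)) ▸ self_mem_Iic) fun s hs => mul_sprojInv_mem_oInt huv hs
  rwa [mul_sprojInv_sproj huv.symm] at h

lemma left_mem_closure_oInt (huv : u ≠ v) : u ∈ closure (oInt u v) := by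
  have h := map_mem_closure (f := fun s => v * sprojInv s) (by fun_prop)
    (closure_Ioi (sproj (v⁻¹ * u)) ▸ self_mem_Ici)
    fun s hs => mul_sprojInv_mem_oInt_swap huv.symm hs
  rwa [mul_sprojInv_sproj huv] at h

lemma oInt_subset_dual (huv : u ≠ v) : oInt v u ⊆ dual (oInt u v) :=
  interior_maximal (fun _ hp => (mem_oInt_iff_notMem_oInt_swap huv.symm hp.1.symm hp.2.1).1 hp)
    (isOpen_oInt huv.symm)

lemma interior_closure_oInt (huv : u ≠ v) : interior (closure (oInt u v)) = oInt u v := by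
  refine subset_antisymm (fun p hp => ?_) (interior_maximal subset_closure (isOpen_oInt huv))
  have hcl : closure (oInt u v) ⊆ (oInt v u)ᶜ := by
    have := oInt_subset_dual huv
    rwa [dual, interior_compl, subset_compl_comm] at this
  have hp' : p ∉ closure (oInt v u) := by
    rw [← mem_compl_iff, ← interior_compl]
    exact interior_mono hcl hp
  have hpu : p ≠ u := by
    rintro rfl
    exact hp' (right_mem_closure_oInt huv.symm)
  have hpv : p ≠ v := by
    rintro rfl
    exact hp' (left_mem_closure_oInt huv.symm)
  exact (mem_oInt_iff_notMem_oInt_swap huv hpu hpv).2 fun h => hp' (subset_closure h)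

end OpenInterval

lemma IsND.interior_closure_eq {A : Set Circle} (h : IsND A) : interior (closure A) = A := by
  obtain ⟨u, v, huv, rfl⟩ := h
  exact interior_closure_oInt huv

lemma IsND.isOpen {A : Set Circle} (h : IsND A) : IsOpen A :=
  h.interior_closure_eq ▸ isOpen_interior

lemma IsND.dual_nonempty {A : Set Circle} (h : IsND A) : (dual A).Nonempty := by
  obtain ⟨u, v, huv, rfl⟩ := h
  exact ⟨_, oInt_subset_dual huv (mul_sprojInv_mem_oInt huv.symm (sub_one_lt _))⟩

lemma dual_anti {A B : Set Circle} (h : A ⊆ B) : dual B ⊆ dual A :=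
  interior_mono (compl_subset_compl.2 h)

lemma dual_subset_compl (A : Set Circle) : dual A ⊆ Aᶜ :=
  interior_subset

lemma subset_of_dual_subset_dual {A B : Set Circle} (hA : interior (closure A) = A)
    (hB : IsOpen B) (h : dual A ⊆ dual B) : B ⊆ A := by
  rw [dual, dual, interior_compl, interior_compl, compl_subset_compl] at h
  rw [← hA]
  exact interior_maximal (subset_closure.trans h) hB

theorem isChain_cset {L : Set (Set Circle)} (hL : LamSys L) {I : Set Circle} (hI : IsND I)
    (x : Circle) : IsChain (· ⊆ ·) (Cset L x I) := by
  rintro J ⟨hJL, hxJ, hJI⟩ K ⟨hKL, hxK, hKI⟩ -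
  rcases hL.unlinked J hJL K hKL with (hJK | hJK) | (hJK | hJK)
  · exact Or.inl hJK
  · -- `J ∪ dual J ⊆ I` leaves no room for `dual I`
    obtain ⟨p, hp⟩ := hI.dual_nonempty
    exact (dual_subset_compl I hp (hKI (hJK (dual_anti hJI hp)))).elim
  · exact (dual_subset_compl K (hJK hxJ) hxK).elim
  · exact Or.inr (subset_of_dual_subset_dual (hL.nd J hJL).interior_closure_eq
      (hL.nd K hKL).isOpen hJK)

theorem stmt8_general (L : Set (Set Circle)) (hL : LamSys L) (I : Set Circle) (hI : IsND I)
    (x : Circle) (hne : (Cset L x I).Nonempty) :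
    (∃ J : ℕ → Set Circle, (∀ n, J n ∈ Cset L x I) ∧ (∀ n, J n ⊆ J (n + 1)) ∧
      (⋃ n, J n) = ⋃₀ (Cset L x I)) ∧
    (∃ K : ℕ → Set Circle, (∀ n, K n ∈ Cset L x I) ∧ (∀ n, K (n + 1) ⊆ K n) ∧
      (⋂ n, K n) = ⋂₀ (Cset L x I)) := by
  have hC := isChain_cset hL hI x
  have hreg : ∀ K ∈ Cset L x I, interior (closure K) = K :=
    fun K hK => (hL.nd K hK.1).interior_closure_eq
  constructor
  · obtain ⟨T, hTc, hTC, hT⟩ := TopologicalSpace.isOpen_sUnion_countable _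
      fun K hK => hreg K hK ▸ isOpen_interior
    obtain ⟨J, hJC, hJ, hJU⟩ := hC.exists_monotone_iSup_eq hne hTC hTc hT
    exact ⟨J, hJC, fun n => hJ n.le_succ, hJU⟩
  · obtain ⟨T, hTC, hTc, hT⟩ := hC.exists_countable_subset_sInter_eq hreg
    obtain ⟨K, hKC, hK, hKI⟩ := hC.exists_antitone_iInf_eq hne hTC hTc hT
    exact ⟨K, hKC, fun n => hK n.le_succ, hKI⟩

/-- If `C_x^I` is nonempty, it contains an increasing sequence exhausting its union and a
decreasing sequence realizing its intersection. -/
theorem stmt8 (L : Set (Set Circle)) (hL : LamSys L) (I : Set Circle) (hI : IsND I)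
    (x : Circle) (hx : x ∈ I) (hne : (Cset L x I).Nonempty) :
    (∃ J : ℕ → Set Circle, (∀ n, J n ∈ Cset L x I) ∧ (∀ n, J n ⊆ J (n + 1)) ∧
      (⋃ n, J n) = ⋃₀ (Cset L x I)) ∧
    (∃ K : ℕ → Set Circle, (∀ n, K n ∈ Cset L x I) ∧ (∀ n, K (n + 1) ⊆ K n) ∧
      (⋂ n, K n) = ⋂₀ (Cset L x I)) :=
  stmt8_general L hL I hI x hne
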